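/- arXiv:math/0504253 — 4 statements merged into one kernel-verified Lean document; each statement's English description precedes it below -/
import Mathlib

section
/- Let F = ℂ(x) be the field of rational functions in one variable over ℂ. Let D be an m × k matrix with entries in F and let Y be a column vector in F^m. Suppose there exists an infinite subset S ⊆ ℂ such that every entry of D and every entry of Y has no pole at any point of S, and such that for every c ∈ S the evaluated linear system D(c)·X' = Y(c) has exactly one solution X' ∈ ℂ^k. Then there exists exactly one vector X ∈ F^k with D·X = Y. -/
/-- A rational function `f ∈ ℂ(x)` has no pole at `c ∈ ℂ` if it can be written as `p/q`
with `p, q` polynomials and `q(c) ≠ 0`. -/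
def HasNoPoleAt (f : RatFunc ℂ) (c : ℂ) : Prop :=
  ∃ p q : Polynomial ℂ, Polynomial.eval c q ≠ 0 ∧
    f = algebraMap (Polynomial ℂ) (RatFunc ℂ) p / algebraMap (Polynomial ℂ) (RatFunc ℂ) q

/-- Evaluation of a rational function at a point `c ∈ ℂ` (equal to `p(c)/q(c)` whenever
`f = p/q` has no pole at `c`). -/
noncomputable def evalAt (c : ℂ) (f : RatFunc ℂ) : ℂ :=
  RatFunc.eval (RingHom.id ℂ) c f

/-!
Rational functions without a pole at `c` form a subring of `ℂ(x)` on which `evalAt c` is a ring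
homomorphism, so evaluation commutes with `D *ᵥ v` and `u ᵥ* D` whenever nothing has a pole at
`c`; and since `S` is infinite, some `c ∈ S` avoids the poles of finitely many given functions and
the zeros of a given nonzero one. Uniqueness: a nonzero `v` with `D v = 0` specializes at such a
`c` to a nonzero kernel vector of `D(c)`. Existence: if `Y ∉ range D`, duality gives `u` with
`uᵀD = 0` and `uᵀY ≠ 0`, which specializes to a certificate that `D(c)X' = Y(c)` is unsolvable.
-/

open Matrix

namespace Matrix

variable {K R m n : Type*} [Fintype n]

theorem eq_zero_of_mulVec_eq_zero_of_existsUnique [Ring R] {A : Matrix m n R} {y : m → R}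
    (h : ∃! x, A *ᵥ x = y) {w : n → R} (hw : A *ᵥ w = 0) : w = 0 := by
  obtain ⟨x, hx, hunique⟩ := h
  have : x + w = x := hunique _ (show A *ᵥ (x + w) = y by rw [mulVec_add, hx, hw, add_zero])
  exact add_eq_left.mp this

theorem exists_vecMul_eq_zero_dotProduct_ne_zero [Fintype m] [Field K] (A : Matrix m n K)
    {y : m → K} (hy : ∀ x, A *ᵥ x ≠ y) : ∃ u : m → K, u ᵥ* A = 0 ∧ u ⬝ᵥ y ≠ 0 := by
  classical
  have hnotMem : y ∉ LinearMap.range A.mulVecLin := by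
    rintro ⟨x, hx⟩
    exact hy x hx
  obtain ⟨f, hfy, hf⟩ := Submodule.exists_dual_map_eq_bot_of_notMem hnotMem inferInstance
  set u := (dotProductEquiv K m).symm f
  have hfu : ∀ z, f z = u ⬝ᵥ z := fun z => by
    rw [← dotProductEquiv_apply_apply K m u, LinearEquiv.apply_symm_apply]
  refine ⟨u, funext fun j => ?_, by rwa [← hfu]⟩
  have hmem : f (A *ᵥ Pi.single j 1) ∈ (LinearMap.range A.mulVecLin).map f :=
    Submodule.mem_map_of_mem ⟨_, rfl⟩
  rw [hf, Submodule.mem_bot, hfu, dotProduct_mulVec, dotProduct_single_one] at hmem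
  exact hmem

end Matrix

theorem hasNoPoleAt_iff_eval_denom_ne_zero {f : RatFunc ℂ} {c : ℂ} :
    HasNoPoleAt f c ↔ f.denom.eval c ≠ 0 := by
  constructor
  · rintro ⟨p, q, hq, rfl⟩ h
    exact hq (Polynomial.eval_eq_zero_of_dvd_of_eval_eq_zero (RatFunc.denom_div_dvd p q) h)
  · exact fun h => ⟨_, _, h, f.num_div_denom.symm⟩

theorem HasNoPoleAt.of_denom_dvd {f g h : RatFunc ℂ} {c : ℂ} (hd : f.denom ∣ g.denom * h.denom)
    (hg : HasNoPoleAt g c) (hh : HasNoPoleAt h c) : HasNoPoleAt f c := by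
  rw [hasNoPoleAt_iff_eval_denom_ne_zero] at *
  exact fun hf => mul_ne_zero hg hh (by
    simpa using Polynomial.eval_eq_zero_of_dvd_of_eval_eq_zero hd hf)

/-- The local ring of `ℂ(x)` at `c`. -/
def noPoleSubring (c : ℂ) : Subring (RatFunc ℂ) where
  carrier := {f | HasNoPoleAt f c}
  mul_mem' hf hg := HasNoPoleAt.of_denom_dvd (RatFunc.denom_mul_dvd _ _) hf hg
  one_mem' := hasNoPoleAt_iff_eval_denom_ne_zero.2 (by simp)
  add_mem' hf hg := HasNoPoleAt.of_denom_dvd (RatFunc.denom_add_dvd _ _) hf hg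
  zero_mem' := hasNoPoleAt_iff_eval_denom_ne_zero.2 (by simp)
  neg_mem' := by
    rintro _ ⟨p, q, hq, rfl⟩
    exact ⟨-p, q, hq, by rw [map_neg]; ring⟩

noncomputable def evalAtRingHom (c : ℂ) : noPoleSubring c →+* ℂ where
  toFun f := evalAt c f
  map_one' := RatFunc.eval_one _ _
  map_mul' f g := RatFunc.eval_mul _ _ (hasNoPoleAt_iff_eval_denom_ne_zero.1 f.2)
    (hasNoPoleAt_iff_eval_denom_ne_zero.1 g.2)
  map_zero' := RatFunc.eval_zero _ _
  map_add' f g := RatFunc.eval_add _ _ (hasNoPoleAt_iff_eval_denom_ne_zero.1 f.2)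
    (hasNoPoleAt_iff_eval_denom_ne_zero.1 g.2)

section Evaluation

variable {m n : Type*} {c : ℂ}

theorem evalAt_dotProduct [Fintype n] {u v : n → RatFunc ℂ} (hu : ∀ i, HasNoPoleAt (u i) c)
    (hv : ∀ i, HasNoPoleAt (v i) c) :
    evalAt c (u ⬝ᵥ v) = (evalAt c ∘ u) ⬝ᵥ (evalAt c ∘ v) := by
  let u' : n → noPoleSubring c := fun i => ⟨u i, hu i⟩
  let v' : n → noPoleSubring c := fun i => ⟨v i, hv i⟩
  have hlift : u ⬝ᵥ v = ((u' ⬝ᵥ v' : noPoleSubring c) : RatFunc ℂ) :=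
    (RingHom.map_dotProduct (noPoleSubring c).subtype u' v').symm
  rw [hlift]
  exact RingHom.map_dotProduct (evalAtRingHom c) u' v'

theorem evalAt_comp_mulVec [Fintype n] {A : Matrix m n (RatFunc ℂ)} {v : n → RatFunc ℂ}
    (hA : ∀ i j, HasNoPoleAt (A i j) c) (hv : ∀ j, HasNoPoleAt (v j) c) :
    evalAt c ∘ (A *ᵥ v) = A.map (evalAt c) *ᵥ (evalAt c ∘ v) :=
  funext fun i => evalAt_dotProduct (hA i) hv

theorem evalAt_comp_vecMul [Fintype m] {A : Matrix m n (RatFunc ℂ)} {u : m → RatFunc ℂ}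
    (hu : ∀ i, HasNoPoleAt (u i) c) (hA : ∀ i j, HasNoPoleAt (A i j) c) :
    evalAt c ∘ (u ᵥ* A) = (evalAt c ∘ u) ᵥ* A.map (evalAt c) :=
  funext fun j => evalAt_dotProduct hu fun i => hA i j

end Evaluation

theorem exists_mem_forall_hasNoPoleAt_evalAt_ne_zero {ι : Type*} [Fintype ι] {S : Set ℂ}
    (hS : S.Infinite) (f : ι → RatFunc ℂ) {g : RatFunc ℂ} (hg : g ≠ 0) :
    ∃ c ∈ S, (∀ i, HasNoPoleAt (f i) c) ∧ evalAt c g ≠ 0 := by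
  set P := g.num * g.denom * ∏ i, (f i).denom
  have hP : P ≠ 0 := mul_ne_zero (mul_ne_zero (RatFunc.num_ne_zero hg) g.denom_ne_zero)
    (Finset.prod_ne_zero_iff.2 fun i _ => (f i).denom_ne_zero)
  obtain ⟨c, hcS, hc⟩ := (hS.sdiff (Polynomial.finite_setOfPred_isRoot hP)).nonempty
  have hPc : P.eval c ≠ 0 := hc
  simp only [P, Polynomial.eval_mul, Polynomial.eval_prod, mul_ne_zero_iff,
    Finset.prod_ne_zero_iff] at hPc
  obtain ⟨⟨hnum, hdenom⟩, hf⟩ := hPc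
  exact ⟨c, hcS, fun i => hasNoPoleAt_iff_eval_denom_ne_zero.2 (hf i (Finset.mem_univ i)),
    div_ne_zero hnum hdenom⟩

section SpecializationArgument

variable {m n : Type*} [Fintype n] {S : Set ℂ} {D : Matrix m n (RatFunc ℂ)}

theorem eq_zero_of_mulVec_eq_zero_of_evalAt (hS : S.Infinite)
    (hD : ∀ c ∈ S, ∀ i j, HasNoPoleAt (D i j) c)
    (hinj : ∀ c ∈ S, ∀ w, D.map (evalAt c) *ᵥ w = 0 → w = 0)
    {v : n → RatFunc ℂ} (hv : D *ᵥ v = 0) : v = 0 := by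
  by_contra hne
  obtain ⟨j, hj⟩ := Function.ne_iff.mp hne
  obtain ⟨c, hcS, hvc, hvj⟩ := exists_mem_forall_hasNoPoleAt_evalAt_ne_zero hS v hj
  have hker : D.map (evalAt c) *ᵥ (evalAt c ∘ v) = 0 := by
    rw [← evalAt_comp_mulVec (hD c hcS) hvc, hv]
    exact funext fun _ => RatFunc.eval_zero _ _
  exact hvj (congrFun (hinj c hcS _ hker) j)

theorem exists_mulVec_eq_of_evalAt [Fintype m] (hS : S.Infinite)
    (hD : ∀ c ∈ S, ∀ i j, HasNoPoleAt (D i j) c) {Y : m → RatFunc ℂ}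
    (hY : ∀ c ∈ S, ∀ i, HasNoPoleAt (Y i) c)
    (hsol : ∀ c ∈ S, ∃ X', D.map (evalAt c) *ᵥ X' = evalAt c ∘ Y) :
    ∃ X, D *ᵥ X = Y := by
  by_contra! hne
  obtain ⟨u, huD, huY⟩ := D.exists_vecMul_eq_zero_dotProduct_ne_zero hne
  obtain ⟨c, hcS, huc, hc⟩ := exists_mem_forall_hasNoPoleAt_evalAt_ne_zero hS u huY
  obtain ⟨X', hX'⟩ := hsol c hcS
  have hucD : (evalAt c ∘ u) ᵥ* D.map (evalAt c) = 0 := by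
    rw [← evalAt_comp_vecMul huc (hD c hcS), huD]
    exact funext fun _ => RatFunc.eval_zero _ _
  apply hc
  rw [evalAt_dotProduct huc (hY c hcS), ← hX', dotProduct_mulVec, hucD,
    zero_dotProduct]

end SpecializationArgument

theorem stmt0 (m k : ℕ) (D : Matrix (Fin m) (Fin k) (RatFunc ℂ)) (Y : Fin m → RatFunc ℂ)
    (S : Set ℂ) (hS : S.Infinite)
    (hD : ∀ c ∈ S, ∀ i j, HasNoPoleAt (D i j) c)
    (hY : ∀ c ∈ S, ∀ i, HasNoPoleAt (Y i) c)
    (hsol : ∀ c ∈ S, ∃! X' : Fin k → ℂ,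
      (Matrix.of fun i j => evalAt c (D i j)).mulVec X' = fun i => evalAt c (Y i)) :
    ∃! X : Fin k → RatFunc ℂ, D.mulVec X = Y := by
  obtain ⟨X, hX⟩ := exists_mulVec_eq_of_evalAt hS hD hY fun c hc => (hsol c hc).exists
  refine ⟨X, hX, fun X' hX' => sub_eq_zero.mp ?_⟩
  refine eq_zero_of_mulVec_eq_zero_of_evalAt hS hD
    (fun c hc _ hw => eq_zero_of_mulVec_eq_zero_of_existsUnique (hsol c hc) hw) ?_
  rw [mulVec_sub, hX', hX, sub_self]
end

section
/- Let F = ℂ(x) be the field of rational functions in one variable over ℂ. Let D be an m × k matrix with entries in F and Y a column vector in F^m. Suppose there exists an infinite subset S ⊆ ℂ such that every entry of D and of Y has no pole at any point of S, and for every c ∈ S the evaluated system D(c)·X' = Y(c) has exactly one solution X' ∈ ℂ^k. If X ∈ F^k satisfies D·X = Y, then every entry of X has no pole at any point of S. -/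
open Polynomial in
lemma eval₂_id_eq (c : ℂ) (p : Polynomial ℂ) : p.eval₂ (RingHom.id ℂ) c = p.eval c := rfl

lemma denom_eval_ne_of_noPole {f : RatFunc ℂ} {c : ℂ} (h : HasNoPoleAt f c) :
    f.denom.eval c ≠ 0 := by
  obtain ⟨p, q, hq, rfl⟩ := h
  obtain ⟨s, hs⟩ := RatFunc.denom_div_dvd p q
  intro h0
  rw [hs, Polynomial.eval_mul, h0, zero_mul] at hq
  exact hq rfl

lemma noPole_of_denom_eval_ne {f : RatFunc ℂ} {c : ℂ} (h : f.denom.eval c ≠ 0) :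
    HasNoPoleAt f c :=
  ⟨f.num, f.denom, h, (RatFunc.num_div_denom f).symm⟩

lemma HasNoPoleAt.add {f g : RatFunc ℂ} {c : ℂ} (hf : HasNoPoleAt f c)
    (hg : HasNoPoleAt g c) : HasNoPoleAt (f + g) c := by
  obtain ⟨p1, q1, hq1, rfl⟩ := hf
  obtain ⟨p2, q2, hq2, rfl⟩ := hg
  have h1 : q1 ≠ 0 := fun h => hq1 (by simp [h])
  have h2 : q2 ≠ 0 := fun h => hq2 (by simp [h])
  refine ⟨p1 * q2 + p2 * q1, q1 * q2, by simp [Polynomial.eval_mul, hq1, hq2], ?_⟩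
  rw [div_add_div _ _ (RatFunc.algebraMap_ne_zero h1) (RatFunc.algebraMap_ne_zero h2)]
  push_cast [map_mul, map_add]
  ring_nf

lemma HasNoPoleAt.mul {f g : RatFunc ℂ} {c : ℂ} (hf : HasNoPoleAt f c)
    (hg : HasNoPoleAt g c) : HasNoPoleAt (f * g) c := by
  obtain ⟨p1, q1, hq1, rfl⟩ := hf
  obtain ⟨p2, q2, hq2, rfl⟩ := hg
  exact ⟨p1 * p2, q1 * q2, by simp [Polynomial.eval_mul, hq1, hq2],
    by rw [div_mul_div_comm, map_mul, map_mul]⟩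

lemma evalAt_add {f g : RatFunc ℂ} {c : ℂ} (hf : HasNoPoleAt f c) (hg : HasNoPoleAt g c) :
    evalAt c (f + g) = evalAt c f + evalAt c g := by
  apply RatFunc.eval_add <;> rw [eval₂_id_eq]
  · exact denom_eval_ne_of_noPole hf
  · exact denom_eval_ne_of_noPole hg

lemma evalAt_mul {f g : RatFunc ℂ} {c : ℂ} (hf : HasNoPoleAt f c) (hg : HasNoPoleAt g c) :
    evalAt c (f * g) = evalAt c f * evalAt c g := by
  apply RatFunc.eval_mul <;> rw [eval₂_id_eq]
  · exact denom_eval_ne_of_noPole hf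
  · exact denom_eval_ne_of_noPole hg

lemma evalAt_sum {ι : Type*} (s : Finset ι) (f : ι → RatFunc ℂ) (c : ℂ)
    (h : ∀ i ∈ s, HasNoPoleAt (f i) c) :
    HasNoPoleAt (∑ i ∈ s, f i) c ∧ evalAt c (∑ i ∈ s, f i) = ∑ i ∈ s, evalAt c (f i) := by
  classical
  induction s using Finset.cons_induction with
  | empty =>
      refine ⟨⟨0, 1, by simp, by simp⟩, ?_⟩
      simp [evalAt, RatFunc.eval_zero]
  | cons a s ha ih =>
      obtain ⟨hs, he⟩ := ih (fun i hi => h i (Finset.mem_cons_of_mem hi))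
      have hfa := h a (Finset.mem_cons_self a s)
      rw [Finset.sum_cons, Finset.sum_cons]
      exact ⟨hfa.add hs, by rw [evalAt_add hfa hs, he]⟩

lemma evalAt_div (p q : Polynomial ℂ) (c : ℂ) (hq : q.eval c ≠ 0) :
    evalAt c (algebraMap (Polynomial ℂ) (RatFunc ℂ) p / algebraMap (Polynomial ℂ) (RatFunc ℂ) q)
      = p.eval c / q.eval c := by
  have hqz : q ≠ 0 := fun h => hq (by simp [h])
  set f := algebraMap (Polynomial ℂ) (RatFunc ℂ) p / algebraMap (Polynomial ℂ) (RatFunc ℂ) q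
    with hf
  have hnp : HasNoPoleAt f c := ⟨p, q, hq, rfl⟩
  have hmul : f * algebraMap (Polynomial ℂ) (RatFunc ℂ) q
      = algebraMap (Polynomial ℂ) (RatFunc ℂ) p := by
    rw [hf, div_mul_cancel₀ _ (RatFunc.algebraMap_ne_zero hqz)]
  have := congrArg (evalAt c) hmul
  rw [evalAt_mul hnp ⟨q, 1, by simp, by simp⟩] at this
  have hq' : evalAt c (algebraMap (Polynomial ℂ) (RatFunc ℂ) q) = q.eval c := by
    simp [evalAt, RatFunc.eval_algebraMap, eval₂_id_eq]
  have hp' : evalAt c (algebraMap (Polynomial ℂ) (RatFunc ℂ) p) = p.eval c := by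
    simp [evalAt, RatFunc.eval_algebraMap, eval₂_id_eq]
  rw [hq', hp'] at this
  rw [eq_div_iff hq]
  exact this

theorem stmt1 (m k : ℕ) (D : Matrix (Fin m) (Fin k) (RatFunc ℂ)) (Y : Fin m → RatFunc ℂ)
    (S : Set ℂ) (hS : S.Infinite)
    (hD : ∀ c ∈ S, ∀ i j, HasNoPoleAt (D i j) c)
    (hY : ∀ c ∈ S, ∀ i, HasNoPoleAt (Y i) c)
    (hsol : ∀ c ∈ S, ∃! X' : Fin k → ℂ,
      (Matrix.of fun i j => evalAt c (D i j)).mulVec X' = fun i => evalAt c (Y i))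
    (X : Fin k → RatFunc ℂ) (hX : D.mulVec X = Y) :
    ∀ c ∈ S, ∀ j, HasNoPoleAt (X j) c := by
  classical
  intro c hc j
  by_contra hpole
  -- pole orders
  set n : Fin k → ℕ := fun i => (X i).denom.rootMultiplicity c with hn
  have hdj : (X j).denom.eval c = 0 := by
    by_contra h; exact hpole (noPole_of_denom_eval_ne h)
  have hnj : 0 < n j :=
    (Polynomial.rootMultiplicity_pos (RatFunc.denom_ne_zero _)).mpr hdj
  obtain ⟨j0, -, hj0⟩ := Finset.exists_max_image (Finset.univ : Finset (Fin k)) n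
    ⟨j, Finset.mem_univ j⟩
  set N := n j0 with hN
  have hN1 : 0 < N := lt_of_lt_of_le hnj (hj0 j (Finset.mem_univ j))
  -- decompose denominators
  have hdecomp : ∀ i : Fin k, ∃ e : Polynomial ℂ,
      (X i).denom = (Polynomial.X - Polynomial.C c) ^ (n i) * e ∧ e.eval c ≠ 0 := by
    intro i
    obtain ⟨e, he, hnd⟩ :=
      (X i).denom.exists_eq_pow_rootMultiplicity_mul_and_not_dvd (RatFunc.denom_ne_zero _) c
    refine ⟨e, he, fun h0 => hnd ?_⟩
    exact Polynomial.dvd_iff_isRoot.mpr h0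
  choose e hdeq hene using hdecomp
  set g : RatFunc ℂ :=
    algebraMap (Polynomial ℂ) (RatFunc ℂ) ((Polynomial.X - Polynomial.C c) ^ N) with hg
  set Z : Fin k → RatFunc ℂ := fun i => g * X i with hZ
  -- key form of Z i
  have hkey : ∀ i : Fin k, Z i =
      algebraMap (Polynomial ℂ) (RatFunc ℂ)
        ((Polynomial.X - Polynomial.C c) ^ (N - n i) * (X i).num) /
      algebraMap (Polynomial ℂ) (RatFunc ℂ) (e i) := by
    intro i
    have hle : n i ≤ N := hj0 i (Finset.mem_univ i)
    have hxc : (Polynomial.X - Polynomial.C c : Polynomial ℂ) ≠ 0 :=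
      Polynomial.X_sub_C_ne_zero c
    have hei : e i ≠ 0 := fun h => hene i (by simp [h])
    have hxcr : algebraMap (Polynomial ℂ) (RatFunc ℂ) (Polynomial.X - Polynomial.C c) ≠ 0 :=
      RatFunc.algebraMap_ne_zero hxc
    have heir : algebraMap (Polynomial ℂ) (RatFunc ℂ) (e i) ≠ 0 :=
      RatFunc.algebraMap_ne_zero hei
    have hdne : algebraMap (Polynomial ℂ) (RatFunc ℂ) ((X i).denom) ≠ 0 :=
      RatFunc.algebraMap_ne_zero (RatFunc.denom_ne_zero _)
    have hXd : X i * algebraMap (Polynomial ℂ) (RatFunc ℂ) ((X i).denom)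
        = algebraMap (Polynomial ℂ) (RatFunc ℂ) (X i).num := by
      rw [eq_comm, ← div_eq_iff hdne]
      exact RatFunc.num_div_denom (X i)
    have hpow : (Polynomial.X - Polynomial.C c) ^ N
        = (Polynomial.X - Polynomial.C c) ^ (N - n i) * (Polynomial.X - Polynomial.C c) ^ (n i) := by
      rw [← pow_add, Nat.sub_add_cancel hle]
    rw [eq_div_iff heir, map_mul]
    show g * X i * algebraMap (Polynomial ℂ) (RatFunc ℂ) (e i) = _
    rw [hg, hpow, map_mul]
    rw [show ∀ a b x ee : RatFunc ℂ, a * b * x * ee = a * (x * (b * ee)) from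
      fun a b x ee => by ring]
    rw [← map_mul, ← hdeq i, hXd]
  have hZnp : ∀ i : Fin k, HasNoPoleAt (Z i) c := fun i =>
    ⟨_, e i, hene i, hkey i⟩
  -- the candidate kernel vector
  set v : Fin k → ℂ := fun i => evalAt c (Z i) with hv
  -- v j0 ≠ 0
  have hvj0 : v j0 ≠ 0 := by
    have hnum : (X j0).num.eval c ≠ 0 := by
      intro h0
      obtain ⟨a, b, hab⟩ := RatFunc.isCoprime_num_denom (X j0)
      have hd0 : (X j0).denom.eval c = 0 := by
        have : (Polynomial.X - Polynomial.C c) ∣ (X j0).denom := by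
          rw [hdeq j0]
          exact Dvd.dvd.mul_right (dvd_pow_self _ (by omega)) _
        have := Polynomial.eval_dvd this (x := c)
        simpa using this
      have := congrArg (Polynomial.eval c) hab
      simp [Polynomial.eval_add, Polynomial.eval_mul, h0, hd0] at this
    rw [hv]
    simp only
    rw [hkey j0, evalAt_div _ _ _ (hene j0)]
    rw [show N - n j0 = 0 from by omega]
    simp [hnum, hene j0]
  -- evaluate the system
  have hZeq : D.mulVec Z = fun i => g * Y i := by
    funext i
    rw [hZ]
    show ∑ l, D i l * (g * X l) = g * Y i
    rw [← hX]
    show _ = g * ∑ l, D i l * X l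
    rw [Finset.mul_sum]
    exact Finset.sum_congr rfl fun l _ => by ring
  have hgval : evalAt c g = 0 := by
    have h := evalAt_div ((Polynomial.X - Polynomial.C c) ^ N) 1 c (by simp)
    rw [map_one, div_one] at h
    rw [hg, h]
    simp [Polynomial.eval_pow, zero_pow hN1.ne']
  have hDv : (Matrix.of fun i l => evalAt c (D i l)).mulVec v = 0 := by
    funext i
    have hterm : ∀ l ∈ Finset.univ, HasNoPoleAt (D i l * Z l) c :=
      fun l _ => (hD c hc i l).mul (hZnp l)
    have hrow := congrArg (fun w => evalAt c (w i)) hZeq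
    simp only at hrow
    have hlhs : evalAt c ((D.mulVec Z) i) = ∑ l, evalAt c (D i l) * v l := by
      show evalAt c (∑ l, D i l * Z l) = _
      rw [(evalAt_sum Finset.univ _ c hterm).2]
      exact Finset.sum_congr rfl fun l _ => evalAt_mul (hD c hc i l) (hZnp l)
    have hrhs : evalAt c (g * Y i) = 0 := by
      have hgnp : HasNoPoleAt g c :=
        ⟨(Polynomial.X - Polynomial.C c) ^ N, 1, by simp, by rw [hg, map_one, div_one]⟩
      rw [evalAt_mul hgnp (hY c hc i), hgval, zero_mul]
    show ∑ l, evalAt c (D i l) * v l = 0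
    rw [← hlhs, hrow, hrhs]
  -- contradiction with uniqueness
  obtain ⟨W, hW, huniq⟩ := hsol c hc
  have hWv : (Matrix.of fun i l => evalAt c (D i l)).mulVec (W + v) =
      fun i => evalAt c (Y i) := by
    rw [Matrix.mulVec_add, hW, hDv, add_zero]
  have := huniq (W + v) hWv
  have hv0 : v j0 = 0 := by
    have h2 : W j0 + v j0 = W j0 := congrFun this j0
    have := add_eq_left.mp h2
    exact this
  exact hvj0 hv0
end

section
/- Let 𝔪 be a Lie algebra over ℂ, let R = ℂ[x] be the polynomial ring, and let A = ℂ[x]_{(x)} be the localization of R at the prime ideal (x). Let M be an R-module that is free as an R-module, equipped with an action of 𝔪 by R-linear endomorphisms making M a Lie module over 𝔪. If the quotient 𝔪-module M/xM has no nonzero element annihilated by every element of 𝔪, then the 𝔪ₐ := 𝔪 ⊗_ℂ A Lie module M_A := M ⊗_R A has no nonzero element annihilated by every element of 𝔪ₐ. -/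
open Polynomial

/-- The ideal `(x) ⊂ ℂ[x]` is prime. -/
instance spanX_isPrime : (Ideal.span {(Polynomial.X : Polynomial ℂ)}).IsPrime :=
  (Ideal.span_singleton_prime Polynomial.X_ne_zero).mpr Polynomial.prime_X

/-- `A = ℂ[x]_{(x)}`, the localization of `ℂ[x]` at the prime ideal `(x)`. -/
noncomputable abbrev LocA : Type :=
  Localization (Ideal.span {(Polynomial.X : Polynomial ℂ)}).primeCompl

/-- A polynomial divisible by all powers of `X` is zero. -/
lemma aux_pow_dvd (p : Polynomial ℂ) (h : ∀ n : ℕ, (X : Polynomial ℂ) ^ n ∣ p) : p = 0 := by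
  by_contra hp
  have := Polynomial.natDegree_le_of_dvd (h (p.natDegree + 1)) hp
  simp [Polynomial.natDegree_X_pow] at this

/-- An element of a free `ℂ[x]`-module divisible by all powers of `X` is zero. -/
lemma aux_free (M : Type*) [AddCommGroup M] [Module (Polynomial ℂ) M]
    [Module.Free (Polynomial ℂ) M] (m : M)
    (h : ∀ n : ℕ, ∃ w : M, m = ((X : Polynomial ℂ)) ^ n • w) : m = 0 := by
  let b := Module.Free.chooseBasis (Polynomial ℂ) M
  have : b.repr m = 0 := by
    apply Finsupp.ext; intro i
    apply aux_pow_dvd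
    intro n
    obtain ⟨w, hw⟩ := h n
    exact ⟨b.repr w i, by rw [hw]; simp [mul_comm]⟩
  simpa using congrArg b.repr.symm this

theorem stmt3 (𝔪 : Type*) [LieRing 𝔪] [LieAlgebra ℂ 𝔪]
    (M : Type*) [AddCommGroup M] [Module ℂ M] [Module (Polynomial ℂ) M]
    [IsScalarTower ℂ (Polynomial ℂ) M] [Module.Free (Polynomial ℂ) M]
    -- the action of `𝔪` on `M` by `ℂ[x]
    (ρ : 𝔪 →ₗ[ℂ] M →ₗ[Polynomial ℂ] M)
    -- `M` is a Lie module over `𝔪`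
    (hρ : ∀ u v : 𝔪, ρ ⁅u, v⁆ = ρ u ∘ₗ ρ v - ρ v ∘ₗ ρ u)
    -- `M/xM` has no nonzero element annihilated by every element of `𝔪`
    (hquot : ∀ v : M, (∀ u : 𝔪, ∃ w : M, ρ u v = (Polynomial.X : Polynomial ℂ) • w) →
      ∃ w : M, v = (Polynomial.X : Polynomial ℂ) • w) :
    -- `M_A = M ⊗_R A` has no nonzero element annihilated by every element of `𝔪 ⊗_ℂ A`
    ∀ v : LocalizedModule (Ideal.span {(Polynomial.X : Polynomial ℂ)}).primeCompl M,
      (∀ (a : LocA) (u : 𝔪),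
        a • (LocalizedModule.map (Ideal.span {(Polynomial.X : Polynomial ℂ)}).primeCompl
          (ρ u)) v = 0) → v = 0 := by
  set S := (Ideal.span {(Polynomial.X : Polynomial ℂ)}).primeCompl with hS
  -- key fact: if all ρ u m = 0 then m = 0
  have key : ∀ m : M, (∀ u : 𝔪, ρ u m = 0) → m = 0 := by
    intro m hm
    apply aux_free
    intro n
    -- strengthen: exists w with m = X^n • w and all ρ u w = 0
    suffices h : ∃ w : M, m = ((X : Polynomial ℂ)) ^ n • w ∧ ∀ u : 𝔪, ρ u w = 0 by
      obtain ⟨w, hw, _⟩ := h; exact ⟨w, hw⟩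
    induction n with
    | zero => exact ⟨m, by simp, hm⟩
    | succ n ih =>
        obtain ⟨w, hw, hw0⟩ := ih
        obtain ⟨w', hw'⟩ := hquot w (fun u => ⟨0, by simp [hw0 u]⟩)
        refine ⟨w', by rw [hw, hw', pow_succ, mul_smul], fun u => ?_⟩
        have : (X : Polynomial ℂ) • ρ u w' = 0 := by
          rw [← map_smul, ← hw', hw0 u]
        rcases smul_eq_zero.mp this with h | h
        · exact absurd h Polynomial.X_ne_zero
        · exact h
  intro v hv
  induction v using LocalizedModule.induction_on with
  | h m s =>
    have hm : ∀ u : 𝔪, ρ u m = 0 := by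
      intro u
      have := hv 1 u
      rw [one_smul, LocalizedModule.map_mk] at this
      rw [← LocalizedModule.zero_mk (1 : S), LocalizedModule.mk_eq] at this
      obtain ⟨t, ht⟩ := this
      simp only [smul_zero, one_smul] at ht
      have htne : (t : Polynomial ℂ) ≠ 0 := fun h => t.2 (by
        rw [SetLike.mem_coe, h]; exact (Ideal.span {(X : Polynomial ℂ)}).zero_mem)
      rcases smul_eq_zero.mp (show (t : Polynomial ℂ) • ρ u m = 0 from ht) with h | h
      · exact absurd h htne
      · exact h
    rw [key m hm, LocalizedModule.zero_mk]
end

section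
/- Let d ≥ 1 and let 𝔪 = ⨁_{a ∈ ℕ^d} 𝔪_a be a ℂ-Lie algebra graded by ℕ^d, i.e. [𝔪_a, 𝔪_b] ⊆ 𝔪_{a+b}, with every homogeneous component 𝔪_a finite-dimensional over ℂ. Let R = ℂ[x] and let M = ⨁_{a ∈ ℤ^d, a ≤ 0} M_a be a ℤ^d-graded R-module supported in degrees a with all coordinates ≤ 0, each M_a free of finite rank over R, equipped with an R-linear Lie module action of 𝔪 satisfying 𝔪_a · M_b ⊆ M_{a+b} (interpreted as 0 when a+b has a positive coordinate). For c ∈ ℂ let M(c) := M/(x−c)M, a ℤ^d-graded 𝔪-module over ℂ. Fix ν ∈ ℤ^d. Suppose there is an infinite set S ⊆ ℂ such that for every c ∈ S ∪ {0}: (a) there is no nonzero w ∈ M(c)_ν with 𝔪·w = 0, and (b) for every ℂ-linear map ψ : 𝔪 → M(c) with ψ(𝔪_a) ⊆ M(c)_{a+ν} for all a and ψ([u₁,u₂]) = u₁·ψ(u₂) − u₂·ψ(u₁) for all u₁, u₂ ∈ 𝔪, there exists w ∈ M(c)_ν with ψ(u) = u·w for all u ∈ 𝔪. Then for A = ℂ[x]_{(x)},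 every A-linear map φ : 𝔪 ⊗_ℂ A → M ⊗_R A with φ(𝔪_a ⊗ A) ⊆ M_{a+ν} ⊗_R A for all a and φ([u₁,u₂]) = u₁·φ(u₂) − u₂·φ(u₁) for all u₁, u₂ ∈ 𝔪 ⊗_ℂ A, is of the form φ(u) = u·v for some v ∈ M_ν ⊗_R A. -/
/-!
Graded `1`-cocycles `𝔪 → M` of degree `ν` form a `ℂ[x]`-submodule `Z` of `Hom_ℂ(𝔪, M)`. As `𝔪`
lives in degrees `≥ 0` and `M` in degrees `≤ 0`, a graded map only sees the finitely many
finite-dimensional components `𝔪_a` with `a + ν ≤ 0`, so `Z` is finitely generated. Hypothesis (b)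
at `c = 0`, together with the torsion-freeness of `M`, gives `Z ≤ B + x Z`, where `B` is the
module of coboundaries `u ↦ u • w`, `w ∈ M_ν`. By Nakayama there is `r ≡ 1 mod x` with `r Z ≤ B`.
Clearing the finitely many denominators writes a cocycle `φ` with values in `M ⊗ A` as `ψ / s`
with `ψ ∈ Z`, and then `r ψ = (u ↦ u • w)` gives `φ u = u • (w / (r s))`.
-/
open Polynomial

/-- The `ℂ`-module structure on the localized module, by restriction of scalars along
`ℂ → ℂ[x]`. -/
noncomputable instance instModC (M : Type*) [AddCommGroup M] [Module (Polynomial ℂ) M] :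
    Module ℂ (LocalizedModule (Ideal.span {(Polynomial.X : Polynomial ℂ)}).primeCompl M) :=
  Module.compHom _ (algebraMap ℂ (Polynomial ℂ))

namespace DirectSum.IsInternal

variable {R M ι : Type*} [CommRing R] [AddCommGroup M] [Module R M] [DecidableEq ι]
  {Mg : ι → Submodule R M} [∀ i, Module.IsTorsionFree R (Mg i)]

theorem isTorsionFree (h : IsInternal Mg) : Module.IsTorsionFree R M := by
  let := h.chooseDecomposition
  refine Function.Injective.moduleIsTorsionFree (fun m i => decompose Mg m i) ?_ ?_
  · intro m m' hmm'
    exact (decompose Mg).injective (DFinsupp.ext (congrFun hmm'))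
  · intro r m
    ext i : 1
    simp only [decompose_smul]
    rfl

theorem mem_of_smul_mem (h : IsInternal Mg) {r : R} (hr : IsRegular r) {i : ι} {m : M}
    (hm : r • m ∈ Mg i) : m ∈ Mg i := by
  let := h.chooseDecomposition
  have hcomp : ∀ j ≠ i, decompose Mg m j = 0 := fun j hj =>
    hr.isSMulRegular (M := Mg j) <| by
      change r • _ = r • 0
      rw [smul_zero, ← DFinsupp.smul_apply, ← decompose_smul]
      exact Subtype.ext (decompose_of_mem_ne Mg hm hj.symm)
  have hm' : decompose Mg m = of _ i (decompose Mg m i) := by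
    ext j : 1
    obtain rfl | hj := eq_or_ne j i
    · simp
    · rw [hcomp j hj, of_eq_of_ne _ _ _ hj]
  rw [← (decompose Mg).symm_apply_apply m, hm', decompose_symm_of]
  exact SetLike.coe_mem _

end DirectSum.IsInternal

theorem Set.finite_setOf_forall_natCast_add_nonpos {ι : Type*} [Finite ι] (ν : ι → ℤ) :
    {a : ι → ℕ | ∀ i, (a i : ℤ) + ν i ≤ 0}.Finite :=
  (Set.Finite.pi fun i => Set.finite_Iic (-ν i).toNat).subset fun a ha i _ => by
    have := ha i
    simp only [Set.mem_Iic]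
    omega

section LinearMaps

variable {k R V M : Type*} [CommRing k] [CommRing R] [Algebra k R] [AddCommGroup V] [Module k V]
  [AddCommGroup M] [Module k M] [Module R M] [IsScalarTower k R M]

theorem LinearMap.exists_eq_smul_of_forall_exists_eq_smul {r : R} (hr : IsSMulRegular M r)
    (ψ : V →ₗ[k] M) (h : ∀ u, ∃ m, ψ u = r • m) : ∃ χ : V →ₗ[k] M, ψ = r • χ := by
  let f : M →ₗ[k] M := (r • LinearMap.id : M →ₗ[R] M).restrictScalars k
  have hf : Function.Injective f := hr
  refine ⟨(LinearEquiv.ofInjective f hf).symm.toLinearMap ∘ₗ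
    ψ.codRestrict (LinearMap.range f) fun u => (h u).imp fun m hm => hm.symm, ?_⟩
  ext u
  exact (LinearEquiv.ofInjective_symm_apply f (h := hf) ⟨ψ u, _⟩).symm

/-- Evaluation at generators of `W` embeds `C` into a finite power of `N`. -/
theorem Submodule.fg_of_forall_map_mem_of_forall_map_eq_zero [IsNoetherianRing R]
    {W K : Submodule k V} (hWK : W ⊔ K = ⊤) (hW : W.FG) {N : Submodule R M} (hN : N.FG)
    {C : Submodule R (V →ₗ[k] M)} (hCW : ∀ ψ ∈ C, ∀ u ∈ W, ψ u ∈ N)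
    (hCK : ∀ ψ ∈ C, ∀ u ∈ K, ψ u = 0) : C.FG := by
  obtain ⟨G, rfl⟩ := hW
  have : Module.Finite R N := Module.Finite.iff_fg.mpr hN
  let ev : C →ₗ[R] G → N := LinearMap.pi fun g =>
    (LinearMap.applyₗ' R (g : V) ∘ₗ C.subtype).codRestrict N
      fun ψ => hCW ψ ψ.2 g (Submodule.subset_span g.2)
  have hev : Function.Injective ev := by
    refine (injective_iff_map_eq_zero ev).mpr fun ψ hψ => Subtype.ext <| LinearMap.ext fun u => ?_
    have hle : span k (G : Set V) ⊔ K ≤ LinearMap.ker (ψ : V →ₗ[k] M) := by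
      refine sup_le (Submodule.span_le.mpr fun g hg => ?_) fun u hu => hCK ψ ψ.2 u hu
      exact congrArg Subtype.val (congrFun hψ ⟨g, hg⟩)
    exact hle (hWK ▸ Submodule.mem_top)
  have := isNoetherian_of_injective ev hev
  exact Module.Finite.iff_fg.mp inferInstance

end LinearMaps

namespace LocalizedModule

variable {k R V M : Type*} [CommRing k] [CommRing R] [Algebra k R] [AddCommGroup V] [Module k V]
  [AddCommGroup M] [Module R M] {S : Submonoid R}

theorem mkLinearMap_injective [IsDomain R] [Module.IsTorsionFree R M] (hS : (0 : R) ∉ S) :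
    Function.Injective (mkLinearMap S M) :=
  (IsLocalizedModule.injective_iff_isRegular S _).mpr fun t =>
    (IsRegular.of_ne_zero fun h => hS (h ▸ t.2)).isSMulRegular

theorem mk_left_injective (hinj : Function.Injective (mkLinearMap S M)) (s : S) :
    Function.Injective fun m : M => mk m s := fun m m' h => hinj <| by
  simp only [mkLinearMap_apply, ← mk_cancel s, Submonoid.smul_def, ← smul'_mk]
  exact congrArg ((s : R) • ·) h

theorem mk_sub (m m' : M) (s : S) : mk (m - m') s = mk m s - mk m' s := by
  rw [sub_eq_add_neg, sub_eq_add_neg, ← mk_neg]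
  exact OreLocalization.add_oreDiv.symm

theorem mem_of_mk_eq_mk {N : Submodule R M} (hN : ∀ (t : S) (m : M), (t : R) • m ∈ N → m ∈ N)
    {m n : M} {s t : S} (hn : n ∈ N) (h : mk m s = mk n t) : m ∈ N := by
  obtain ⟨c, hc⟩ := mk_eq.mp h
  refine hN (c * t) m ?_
  rw [Submonoid.coe_mul, mul_smul, ← Submonoid.smul_def, ← Submonoid.smul_def, hc]
  exact N.smul_of_tower_mem c (N.smul_of_tower_mem s hn)

variable (S) [Module k (LocalizedModule S M)] [IsScalarTower k R (LocalizedModule S M)]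

theorem exists_smul_mem_range_mkLinearMap {W K : Submodule k V} (hWK : W ⊔ K = ⊤) (hW : W.FG)
    (φ : V →ₗ[k] LocalizedModule S M) (hK : ∀ u ∈ K, φ u = 0) :
    ∃ s : S, ∀ u, (s : R) • φ u ∈ LinearMap.range (mkLinearMap S M) := by
  obtain ⟨G, rfl⟩ := hW
  obtain ⟨s, hs⟩ := IsLocalizedModule.exist_integer_multiples S (mkLinearMap S M) G φ
  let D : Submodule k V :=
    (((LinearMap.range (mkLinearMap S M)).comap ((s : R) • LinearMap.id)).restrictScalars k).comap φ
  have hD : Submodule.span k (G : Set V) ⊔ K ≤ D :=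
    sup_le (Submodule.span_le.mpr fun g hg => hs g hg) fun u hu => by simp [D, hK u hu]
  exact ⟨s, fun u => hD (hWK ▸ Submodule.mem_top)⟩

variable [Module k M] [IsScalarTower k R M]

theorem exists_linearMap_eq_mk (hinj : Function.Injective (mkLinearMap S M))
    (φ : V →ₗ[k] LocalizedModule S M) (s : S)
    (hs : ∀ u, (s : R) • φ u ∈ LinearMap.range (mkLinearMap S M)) :
    ∃ ψ : V →ₗ[k] M, ∀ u, φ u = mk (ψ u) s := by
  let f := (mkLinearMap S M).restrictScalars k
  let ψ := (LinearEquiv.ofInjective f hinj).symm.toLinearMap ∘ₗ ((s : R) • φ).codRestrict _ hs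
  refine ⟨ψ, fun u => IsLocalizedModule.smul_injective (mkLinearMap S M) s ?_⟩
  have hψ : mk (ψ u) 1 = (s : R) • φ u := LinearEquiv.ofInjective_symm_apply f (h := hinj) _
  change s • φ u = s • mk (ψ u) s
  rw [Submonoid.smul_def, Submonoid.smul_def, ← hψ, smul'_mk, ← Submonoid.smul_def, mk_cancel]

end LocalizedModule

section Cocycles

-- `[Module k M]` comes last: before it, the `SMul k` in `IsScalarTower k R (LocalizedModule S M)`
-- can only be the given `Module k` structure, not Mathlib's own action on the localization.
variable {k R 𝔪 M ι : Type*} [CommRing k] [CommRing R] [Algebra k R] [LieRing 𝔪] [Module k 𝔪]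
  [AddCommGroup M] [Module R M] {S : Submonoid R} [Module k (LocalizedModule S M)]
  [IsScalarTower k R (LocalizedModule S M)] [Module k M] [IsScalarTower k R M]

variable (ρ : 𝔪 →ₗ[k] M →ₗ[R] M)

def cocycles : Submodule R (𝔪 →ₗ[k] M) where
  carrier := {ψ | ∀ u₁ u₂, ψ ⁅u₁, u₂⁆ = ρ u₁ (ψ u₂) - ρ u₂ (ψ u₁)}
  add_mem' {ψ χ} hψ hχ u₁ u₂ := by
    simp only [LinearMap.add_apply, hψ u₁ u₂, hχ u₁ u₂, map_add]
    abel
  zero_mem' _ _ := by simp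
  smul_mem' r ψ hψ u₁ u₂ := by
    simp only [LinearMap.smul_apply, hψ u₁ u₂, map_smul, smul_sub]

def gradedMaps (mg : ι → Submodule k 𝔪) (N : ι → Submodule R M) :
    Submodule R (𝔪 →ₗ[k] M) where
  carrier := {ψ | ∀ a, ∀ u ∈ mg a, ψ u ∈ N a}
  add_mem' hψ hχ a u hu := add_mem (hψ a u hu) (hχ a u hu)
  zero_mem' a _ _ := zero_mem (N a)
  smul_mem' r _ hψ a u hu := Submodule.smul_mem _ r (hψ a u hu)

variable {ρ} {mg : ι → Submodule k 𝔪} {N : ι → Submodule R M}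

theorem flip_mem_cocycles (hρ : ∀ u v : 𝔪, ρ ⁅u, v⁆ = ρ u ∘ₗ ρ v - ρ v ∘ₗ ρ u) (w : M) :
    ρ.flip w ∈ cocycles ρ := fun u₁ u₂ => by
  simp [hρ]

theorem mem_cocycles_of_smul_mem {r : R} (hr : IsSMulRegular M r) {χ : 𝔪 →ₗ[k] M}
    (h : r • χ ∈ cocycles ρ) : χ ∈ cocycles ρ := fun u₁ u₂ => hr <| by
  simpa [smul_sub] using h u₁ u₂

theorem map_mem_biSup_of_mem_gradedMaps {ψ : 𝔪 →ₗ[k] M} (hψ : ψ ∈ gradedMaps mg N)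
    (p : ι → Prop) {u : 𝔪} (hu : u ∈ ⨆ (a) (_ : p a), mg a) : ψ u ∈ ⨆ (a) (_ : p a), N a := by
  refine (iSup₂_le fun a ha v hv => ?_ :
    ⨆ (a) (_ : p a), mg a ≤ ((⨆ (a) (_ : p a), N a).restrictScalars k).comap ψ) hu
  exact le_iSup₂ (f := fun a (_ : p a) => N a) a ha (hψ a v hv)

theorem gradedMaps_fg [IsNoetherianRing R] [∀ a, Module.Finite k (mg a)]
    [∀ a, Module.Finite R (N a)] (hmg : ⨆ a, mg a = ⊤) (F : Finset ι) (hN : ∀ a ∉ F, N a = ⊥) :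
    (gradedMaps mg N).FG := by
  have hK : ⨆ (a) (_ : a ∉ F), N a = ⊥ := iSup₂_eq_bot.mpr hN
  refine Submodule.fg_of_forall_map_mem_of_forall_map_eq_zero
    ((iSup_split mg (· ∈ F)).symm.trans hmg)
    (Submodule.fg_biSup F mg fun a _ => Module.Finite.iff_fg.mp inferInstance)
    (Submodule.fg_biSup F N fun a _ => Module.Finite.iff_fg.mp inferInstance)
    (fun ψ hψ u hu => map_mem_biSup_of_mem_gradedMaps hψ _ hu) fun ψ hψ u hu => ?_
  simpa [hK] using map_mem_biSup_of_mem_gradedMaps hψ (· ∉ F) hu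

theorem exists_mem_gradedMaps_inf_cocycles_eq_mk [∀ a, Module.Finite k (mg a)]
    (hinj : Function.Injective (LocalizedModule.mkLinearMap S M))
    (hN : ∀ a (t : S) (m : M), (t : R) • m ∈ N a → m ∈ N a)
    (hmg : ⨆ a, mg a = ⊤) (F : Finset ι) (hNF : ∀ a ∉ F, N a = ⊥)
    (φ : 𝔪 →ₗ[k] LocalizedModule S M)
    (hφgr : ∀ a, ∀ u ∈ mg a, ∃ m ∈ N a, ∃ t : S, φ u = LocalizedModule.mk m t)
    (hφcoc : ∀ u₁ u₂, φ ⁅u₁, u₂⁆ =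
      LocalizedModule.map S (ρ u₁) (φ u₂) - LocalizedModule.map S (ρ u₂) (φ u₁)) :
    ∃ (s : S) (ψ : 𝔪 →ₗ[k] M),
      ψ ∈ gradedMaps mg N ⊓ cocycles ρ ∧ ∀ u, φ u = LocalizedModule.mk (ψ u) s := by
  have hφK : ∀ u ∈ ⨆ (a) (_ : a ∉ F), mg a, φ u = 0 := by
    refine fun u hu => (iSup₂_le fun a ha v hv => ?_ : _ ≤ LinearMap.ker φ) hu
    obtain ⟨m, hm, t, ht⟩ := hφgr a v hv
    rw [hNF a ha, Submodule.mem_bot] at hm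
    rw [LinearMap.mem_ker, ht, hm, LocalizedModule.zero_mk]
  obtain ⟨s, hs⟩ := LocalizedModule.exists_smul_mem_range_mkLinearMap S
    ((iSup_split mg (· ∈ F)).symm.trans hmg)
    (Submodule.fg_biSup F mg fun a _ => Module.Finite.iff_fg.mp inferInstance) φ hφK
  obtain ⟨ψ, hψ⟩ := LocalizedModule.exists_linearMap_eq_mk S hinj φ s hs
  refine ⟨s, ψ, ⟨fun a u hu => ?_, fun u₁ u₂ => ?_⟩, hψ⟩
  · obtain ⟨m, hm, t, ht⟩ := hφgr a u hu
    exact LocalizedModule.mem_of_mk_eq_mk (hN a) hm ((hψ u).symm.trans ht)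
  · refine LocalizedModule.mk_left_injective hinj s ?_
    simpa only [hψ, LocalizedModule.map_mk, LocalizedModule.mk_sub] using hφcoc u₁ u₂

/-- The quotient of `ψ - (u ↦ u • w)` by `r` is again a graded cocycle, as `M` and the `N a` are
`r`-saturated. -/
theorem gradedMaps_inf_cocycles_le_sup_smul (hρ : ∀ u v : 𝔪, ρ ⁅u, v⁆ = ρ u ∘ₗ ρ v - ρ v ∘ₗ ρ u)
    {W : Submodule R M} (hW : ∀ a, ∀ u ∈ mg a, ∀ w ∈ W, ρ u w ∈ N a)
    {r : R} (hr : IsSMulRegular M r) (hN : ∀ a m, r • m ∈ N a → m ∈ N a)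
    (h : ∀ ψ : 𝔪 →ₗ[k] M, (∀ a, ∀ u ∈ mg a, ∃ m₀ ∈ N a, ∃ m, ψ u = m₀ + r • m) →
      (∀ u₁ u₂, ∃ m, ψ ⁅u₁, u₂⁆ - ρ u₁ (ψ u₂) + ρ u₂ (ψ u₁) = r • m) →
      ∃ w ∈ W, ∀ u, ∃ m, ψ u - ρ u w = r • m) :
    gradedMaps mg N ⊓ cocycles ρ ≤
      W.map ρ.flip ⊔ Ideal.span {r} • (gradedMaps mg N ⊓ cocycles ρ) := by
  intro ψ hψ
  obtain ⟨w, hw, hdiv⟩ := h ψ (fun a u hu => ⟨ψ u, hψ.1 a u hu, 0, by rw [smul_zero, add_zero]⟩)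
    fun u₁ u₂ => ⟨0, by rw [hψ.2 u₁ u₂, smul_zero]; abel⟩
  have hwZ : ρ.flip w ∈ gradedMaps mg N ⊓ cocycles ρ :=
    ⟨fun a u hu => hW a u hu w hw, flip_mem_cocycles hρ w⟩
  obtain ⟨χ, hχ⟩ := (ψ - ρ.flip w).exists_eq_smul_of_forall_exists_eq_smul hr hdiv
  have hχZ : r • χ ∈ gradedMaps mg N ⊓ cocycles ρ := hχ ▸ sub_mem hψ hwZ
  rw [sub_eq_iff_eq_add'.mp hχ]
  exact Submodule.add_mem_sup ⟨w, hw, rfl⟩ <| Submodule.smul_mem_smul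
    (Ideal.mem_span_singleton_self r)
    ⟨fun a u hu => hN a _ (hχZ.1 a u hu), mem_cocycles_of_smul_mem hr hχZ.2⟩

end Cocycles

theorem stmt4_general (d : ℕ)
    -- `𝔪` is an `ℕ^d`-graded Lie algebra over `ℂ` with finite-dimensional components
    (𝔪 : Type*) [LieRing 𝔪] [LieAlgebra ℂ 𝔪]
    (mg : (Fin d → ℕ) → Submodule ℂ 𝔪)
    (hmg : DirectSum.IsInternal mg)
    (hmgfin : ∀ a : Fin d → ℕ, FiniteDimensional ℂ (mg a))
    -- `M` is a `ℤ^d`-graded module over `R = ℂ[x]`, supported in degrees `≤ 0`,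
    -- with components free of finite rank over `R`
    (M : Type*) [AddCommGroup M] [Module ℂ M] [Module (Polynomial ℂ) M]
    [IsScalarTower ℂ (Polynomial ℂ) M]
    (Mg : (Fin d → ℤ) → Submodule (Polynomial ℂ) M)
    (hMg : DirectSum.IsInternal Mg)
    (hMgsupp : ∀ b : Fin d → ℤ, ¬ (∀ i, b i ≤ 0) → Mg b = ⊥)
    (hMgfree : ∀ b : Fin d → ℤ, Module.Free (Polynomial ℂ) (Mg b))
    (hMgfin : ∀ b : Fin d → ℤ, Module.Finite (Polynomial ℂ) (Mg b))
    -- `M` is a Lie module over `𝔪`, the action being `R`-linear and compatible with gradings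
    (ρ : 𝔪 →ₗ[ℂ] M →ₗ[Polynomial ℂ] M)
    (hρ : ∀ u v : 𝔪, ρ ⁅u, v⁆ = ρ u ∘ₗ ρ v - ρ v ∘ₗ ρ u)
    (hgr : ∀ (a : Fin d → ℕ) (b : Fin d → ℤ) (u : 𝔪) (m : M), u ∈ mg a → m ∈ Mg b →
      ρ u m ∈ Mg (fun i => (a i : ℤ) + b i))
    -- fix a degree `ν ∈ ℤ^d` and an infinite set `S ⊆ ℂ`
    (ν : Fin d → ℤ) (S : Set ℂ)
    -- (b): for every `c ∈ S ∪ {0}`, every graded 1-cocycle `𝔪 → M(c)` of degree `ν`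
    -- is a coboundary (stated via `ℂ`-linear lifts `ψ : 𝔪 → M`, which always exist)
    (hcob : ∀ c ∈ S ∪ {0}, ∀ ψ : 𝔪 →ₗ[ℂ] M,
      (∀ (a : Fin d → ℕ) (u : 𝔪), u ∈ mg a →
        ∃ m₀ ∈ Mg (fun i => (a i : ℤ) + ν i), ∃ m' : M,
          ψ u = m₀ + (Polynomial.X - Polynomial.C c) • m') →
      (∀ u₁ u₂ : 𝔪, ∃ m' : M,
        ψ ⁅u₁, u₂⁆ - ρ u₁ (ψ u₂) + ρ u₂ (ψ u₁) = (Polynomial.X - Polynomial.C c) • m') →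
      ∃ w ∈ Mg ν, ∀ u : 𝔪, ∃ m' : M,
        ψ u - ρ u w = (Polynomial.X - Polynomial.C c) • m') :
    -- then every graded 1-cocycle `𝔪 ⊗ A → M ⊗_R A` of degree `ν` is a coboundary
    -- (an `A`-linear cocycle on `𝔪 ⊗_ℂ A` is determined by its `ℂ`-linear restriction to `𝔪`)
    ∀ φ : 𝔪 →ₗ[ℂ] LocalizedModule (Ideal.span {(Polynomial.X : Polynomial ℂ)}).primeCompl M,
      (∀ (a : Fin d → ℕ) (u : 𝔪), u ∈ mg a →
        ∃ m ∈ Mg (fun i => (a i : ℤ) + ν i),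
          ∃ s : (Ideal.span {(Polynomial.X : Polynomial ℂ)}).primeCompl,
            φ u = LocalizedModule.mk m s) →
      (∀ u₁ u₂ : 𝔪, φ ⁅u₁, u₂⁆ =
        LocalizedModule.map (Ideal.span {(Polynomial.X : Polynomial ℂ)}).primeCompl
            (ρ u₁) (φ u₂)
          - LocalizedModule.map (Ideal.span {(Polynomial.X : Polynomial ℂ)}).primeCompl
            (ρ u₂) (φ u₁)) →
      ∃ v : LocalizedModule (Ideal.span {(Polynomial.X : Polynomial ℂ)}).primeCompl M,
        (∃ m ∈ Mg ν, ∃ s : (Ideal.span {(Polynomial.X : Polynomial ℂ)}).primeCompl,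
          v = LocalizedModule.mk m s) ∧
        ∀ u : 𝔪, φ u =
          LocalizedModule.map (Ideal.span {(Polynomial.X : Polynomial ℂ)}).primeCompl
            (ρ u) v := by
  intro φ hφgr hφcoc
  have hP : (0 : ℂ[X]) ∉ (Ideal.span {(X : ℂ[X])}).primeCompl := fun h => h (zero_mem _)
  have := hMg.isTorsionFree
  -- `instModC` is not the `ℂ`-action Mathlib itself puts on a localized module
  have : @IsScalarTower ℂ ℂ[X] (LocalizedModule (Ideal.span {(X : ℂ[X])}).primeCompl M) _ _
      (instModC M).toSMul := IsScalarTower.of_compHom ℂ ℂ[X] _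
  let F := (Set.finite_setOf_forall_natCast_add_nonpos ν).toFinset
  have hNF : ∀ a ∉ F, Mg (fun i => a i + ν i) = ⊥ := fun a ha => hMgsupp _ (by simpa [F] using ha)
  obtain ⟨s, ψ, hψZ, hψ⟩ := exists_mem_gradedMaps_inf_cocycles_eq_mk
    (LocalizedModule.mkLinearMap_injective hP)
    (fun a t m => hMg.mem_of_smul_mem (.of_ne_zero fun h => hP (h ▸ t.2)))
    hmg.submodule_iSup_eq_top F hNF φ hφgr hφcoc
  set Z := gradedMaps mg (fun a => Mg (fun i => a i + ν i)) ⊓ cocycles ρ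
  have hZfg : Z.FG := (gradedMaps_fg hmg.submodule_iSup_eq_top F hNF).of_le inf_le_left
  have hX : IsRegular (X - C 0 : ℂ[X]) := .of_ne_zero (X_sub_C_ne_zero 0)
  have hkey : Z ≤ (Mg ν).map ρ.flip ⊔ Ideal.span {(X - C 0 : ℂ[X])} • Z :=
    gradedMaps_inf_cocycles_le_sup_smul hρ (fun a u hu w hw => hgr a ν u w hu hw)
      hX.isSMulRegular (fun a m => hMg.mem_of_smul_mem hX) (hcob 0 (Or.inr rfl))
  obtain ⟨r, hr1, hrZ⟩ := Submodule.exists_sub_one_mem_and_smul_le_of_fg_of_le_sup hZfg le_rfl hkey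
  obtain ⟨w, hw, hrw⟩ := hrZ (Submodule.smul_mem_pointwise_smul ψ r Z hψZ)
  rw [map_zero, sub_zero] at hr1
  have hrP : r ∈ (Ideal.span {(X : ℂ[X])}).primeCompl := fun hr =>
    spanX_isPrime.ne_top <| (Ideal.eq_top_iff_one _).mpr <| by
      simpa only [sub_sub_cancel] using sub_mem hr hr1
  refine ⟨.mk w (⟨r, hrP⟩ * s), ⟨w, hw, _, rfl⟩, fun u => ?_⟩
  rw [LocalizedModule.map_mk, ← LinearMap.flip_apply ρ, hrw, hψ,
    ← LocalizedModule.mk_cancel_common_left ⟨r, hrP⟩]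
  rfl

theorem stmt4 (d : ℕ) (hd : 1 ≤ d)
    -- `𝔪` is an `ℕ^d`-graded Lie algebra over `ℂ` with finite-dimensional components
    (𝔪 : Type*) [LieRing 𝔪] [LieAlgebra ℂ 𝔪]
    (mg : (Fin d → ℕ) → Submodule ℂ 𝔪)
    (hmg : DirectSum.IsInternal mg)
    (hmgfin : ∀ a : Fin d → ℕ, FiniteDimensional ℂ (mg a))
    (hbr : ∀ (a b : Fin d → ℕ) (u v : 𝔪), u ∈ mg a → v ∈ mg b → ⁅u, v⁆ ∈ mg (a + b))
    -- `M` is a `ℤ^d`-graded module over `R = ℂ[x]`, supported in degrees `≤ 0`,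
    -- with components free of finite rank over `R`
    (M : Type*) [AddCommGroup M] [Module ℂ M] [Module (Polynomial ℂ) M]
    [IsScalarTower ℂ (Polynomial ℂ) M]
    (Mg : (Fin d → ℤ) → Submodule (Polynomial ℂ) M)
    (hMg : DirectSum.IsInternal Mg)
    (hMgsupp : ∀ b : Fin d → ℤ, ¬ (∀ i, b i ≤ 0) → Mg b = ⊥)
    (hMgfree : ∀ b : Fin d → ℤ, Module.Free (Polynomial ℂ) (Mg b))
    (hMgfin : ∀ b : Fin d → ℤ, Module.Finite (Polynomial ℂ) (Mg b))
    -- `M` is a Lie module over `𝔪`, the action being `R`-linear and compatible with gradings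
    (ρ : 𝔪 →ₗ[ℂ] M →ₗ[Polynomial ℂ] M)
    (hρ : ∀ u v : 𝔪, ρ ⁅u, v⁆ = ρ u ∘ₗ ρ v - ρ v ∘ₗ ρ u)
    (hgr : ∀ (a : Fin d → ℕ) (b : Fin d → ℤ) (u : 𝔪) (m : M), u ∈ mg a → m ∈ Mg b →
      ρ u m ∈ Mg (fun i => (a i : ℤ) + b i))
    -- fix a degree `ν ∈ ℤ^d` and an infinite set `S ⊆ ℂ`
    (ν : Fin d → ℤ) (S : Set ℂ) (hS : S.Infinite)
    -- (a): for every `c ∈ S ∪ {0}`, `M(c) = M/(x-c)M` has no nonzero invariant of degree `ν`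
    (hinv : ∀ c ∈ S ∪ {0}, ∀ w ∈ Mg ν,
      (∀ u : 𝔪, ∃ m' : M, ρ u w = (Polynomial.X - Polynomial.C c) • m') →
      ∃ m' : M, w = (Polynomial.X - Polynomial.C c) • m')
    -- (b): for every `c ∈ S ∪ {0}`, every graded 1-cocycle `𝔪 → M(c)` of degree `ν`
    -- is a coboundary (stated via `ℂ`-linear lifts `ψ : 𝔪 → M`, which always exist)
    (hcob : ∀ c ∈ S ∪ {0}, ∀ ψ : 𝔪 →ₗ[ℂ] M,
      (∀ (a : Fin d → ℕ) (u : 𝔪), u ∈ mg a →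
        ∃ m₀ ∈ Mg (fun i => (a i : ℤ) + ν i), ∃ m' : M,
          ψ u = m₀ + (Polynomial.X - Polynomial.C c) • m') →
      (∀ u₁ u₂ : 𝔪, ∃ m' : M,
        ψ ⁅u₁, u₂⁆ - ρ u₁ (ψ u₂) + ρ u₂ (ψ u₁) = (Polynomial.X - Polynomial.C c) • m') →
      ∃ w ∈ Mg ν, ∀ u : 𝔪, ∃ m' : M,
        ψ u - ρ u w = (Polynomial.X - Polynomial.C c) • m') :
    -- then every graded 1-cocycle `𝔪 ⊗ A → M ⊗_R A` of degree `ν` is a coboundary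
    -- (an `A`-linear cocycle on `𝔪 ⊗_ℂ A` is determined by its `ℂ`-linear restriction to `𝔪`)
    ∀ φ : 𝔪 →ₗ[ℂ] LocalizedModule (Ideal.span {(Polynomial.X : Polynomial ℂ)}).primeCompl M,
      (∀ (a : Fin d → ℕ) (u : 𝔪), u ∈ mg a →
        ∃ m ∈ Mg (fun i => (a i : ℤ) + ν i),
          ∃ s : (Ideal.span {(Polynomial.X : Polynomial ℂ)}).primeCompl,
            φ u = LocalizedModule.mk m s) →
      (∀ u₁ u₂ : 𝔪, φ ⁅u₁, u₂⁆ =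
        LocalizedModule.map (Ideal.span {(Polynomial.X : Polynomial ℂ)}).primeCompl
            (ρ u₁) (φ u₂)
          - LocalizedModule.map (Ideal.span {(Polynomial.X : Polynomial ℂ)}).primeCompl
            (ρ u₂) (φ u₁)) →
      ∃ v : LocalizedModule (Ideal.span {(Polynomial.X : Polynomial ℂ)}).primeCompl M,
        (∃ m ∈ Mg ν, ∃ s : (Ideal.span {(Polynomial.X : Polynomial ℂ)}).primeCompl,
          v = LocalizedModule.mk m s) ∧
        ∀ u : 𝔪, φ u =
          LocalizedModule.map (Ideal.span {(Polynomial.X : Polynomial ℂ)}).primeCompl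
            (ρ u) v :=
  stmt4_general d 𝔪 mg hmg hmgfin M Mg hMg hMgsupp hMgfree hMgfin ρ hρ hgr ν S hcob
end
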